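/- Fix an integer k ≥ 1 and a real α > 0, and let L = a^k − α^k I. For every finitely supported ψ ∈ ℓ²(ℕ,ℂ), one has ‖L†ψ‖² − ‖Lψ‖² = ⟨ψ|M|ψ⟩ ≥ k!·‖ψ‖², where M is the diagonal operator M|n⟩ = ((n+1)⋯(n+k) − n(n−1)⋯(n−k+1))|n⟩. In particular L†L ≤ LL† as quadratic forms on finitely supported vectors. -/

import Mathlib

noncomputable section

open scoped BigOperators ComplexConjugate

local notation "⟪" x ", " y "⟫" => @inner ℂ _ _ x y

/-- The Hilbert space `H = ℓ²(ℕ, ℂ)` of the quantum harmonic oscillator. -/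
abbrev H : Type := lp (fun _ : ℕ => ℂ) 2

/-- The Fock (number) basis vector `|n⟩`. -/
def fock (n : ℕ) : H := lp.single 2 n 1

/-- Coefficientwise action of the annihilation operator `a`:
`(aψ)_n = √(n+1) ψ_{n+1}`. -/
def acoef (ψ : ℕ → ℂ) : ℕ → ℂ := fun n => (Real.sqrt (n + 1) : ℝ) * ψ (n + 1)

/-- Coefficientwise action of the creation operator `a†`:
`(a†ψ)_n = √n ψ_{n-1}` for `n ≥ 1`, and `(a†ψ)_0 = 0`. -/
def adcoef (ψ : ℕ → ℂ) : ℕ → ℂ :=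
  fun n => if n = 0 then 0 else (Real.sqrt n : ℝ) * ψ (n - 1)

/-- Coefficientwise action of `L = a^k − α^k I`. -/
def Lcoef (k : ℕ) (α : ℝ) (ψ : ℕ → ℂ) : ℕ → ℂ :=
  fun n => acoef^[k] ψ n - (α : ℂ) ^ k * ψ n

/-- Coefficientwise action of `L† = (a†)^k − α^k I`. -/
def Ldcoef (k : ℕ) (α : ℝ) (ψ : ℕ → ℂ) : ℕ → ℂ :=
  fun n => adcoef^[k] ψ n - (α : ℂ) ^ k * ψ n

/-- Coefficientwise action of `L†L`. -/
def LdLcoef (k : ℕ) (α : ℝ) (ψ : ℕ → ℂ) : ℕ → ℂ := Ldcoef k α (Lcoef k α ψ)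

/-- `ψ ∈ H_j`, the domain `{ψ : ∑ n^j |ψ_n|² < ∞}` (inside `ℓ²`). -/
def inHdom (j : ℕ) (ψ : ℕ → ℂ) : Prop :=
  Summable (fun n => ‖ψ n‖ ^ 2) ∧ Summable (fun n : ℕ => (n : ℝ) ^ j * ‖ψ n‖ ^ 2)

/-- Falling factorial `n(n−1)⋯(n−k+1)` (zero when `n < k`). -/
def fallR (k n : ℕ) : ℝ := ∏ j ∈ Finset.range k, ((n : ℝ) - j)

/-- Rising product `(n+1)(n+2)⋯(n+k)`. -/
def riseR (k n : ℕ) : ℝ := ∏ j ∈ Finset.Icc 1 k, ((n : ℝ) + j)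

/-- Eigenvalue `m(n)` of the commutator `M = [a^k, (a†)^k]` on `|n⟩`. -/
def mval (k n : ℕ) : ℝ := riseR k n - fallR k n

/-- The vector `L†|m⟩ = √((m+1)⋯(m+k)) |m+k⟩ − α^k |m⟩`. -/
def ldagFock (k : ℕ) (α : ℝ) (m : ℕ) : H :=
  ((Real.sqrt (riseR k m) : ℝ) : ℂ) • fock (m + k) - ((α : ℂ) ^ k) • fock m

/-- The vector `L†L|m⟩`. -/
def ldlFock (k : ℕ) (α : ℝ) (m : ℕ) : H :=
  ((fallR k m + α ^ (2 * k) : ℝ) : ℂ) • fock m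
    - ((α ^ k * Real.sqrt (fallR k m) : ℝ) : ℂ) • fock (m - k)
    - ((α ^ k * Real.sqrt (riseR k m) : ℝ) : ℂ) • fock (m + k)

/-- A bounded operator is a Hermitian trace-class operator (member of `K¹(H)`) when it is
self-adjoint and admits a spectral decomposition `T = ∑ c_μ |e_μ⟩⟨e_μ|` along a Hilbert basis
with absolutely summable real eigenvalues. -/
def IsHermitianTraceClass (T : H →L[ℂ] H) : Prop :=
  IsSelfAdjoint T ∧
    ∃ (e : HilbertBasis ℕ ℂ H) (c : ℕ → ℝ),
      Summable (fun μ => |c μ|) ∧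
      ∀ x : H, T x = ∑' μ, ((c μ : ℂ) * ⟪e μ, x⟫) • e μ

/-- Trace norm `tr|T| = ∑ |c_μ|` of a Hermitian trace-class operator. -/
def traceNorm (T : H →L[ℂ] H) : ℝ :=
  sInf {s | ∃ (e : HilbertBasis ℕ ℂ H) (c : ℕ → ℝ),
    Summable (fun μ => |c μ|) ∧
    (∀ x : H, T x = ∑' μ, ((c μ : ℂ) * ⟪e μ, x⟫) • e μ) ∧
    s = ∑' μ, |c μ|}

/-- Trace of an operator, computed in the Fock basis. -/
def traceOf (T : H →L[ℂ] H) : ℝ := ∑' n, (⟪fock n, T (fock n)⟫).re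

/-- Positive semidefinite bounded operator. -/
def IsPosSemidef (T : H →L[ℂ] H) : Prop :=
  IsSelfAdjoint T ∧ ∀ x : H, 0 ≤ (⟪x, T x⟫).re

/-- Loewner order on Hermitian operators. -/
def opLE (A B : H →L[ℂ] H) : Prop := IsPosSemidef (B - A)

/-- `(g, d)` is a spectral decomposition of `L†L`: a Hilbert basis of eigenvectors `g_μ`,
lying in the domain `H_{2k}`, with nonnegative eigenvalues `d_μ`. -/
def IsSpectralBasis (k : ℕ) (α : ℝ) (g : HilbertBasis ℕ ℂ H) (d : ℕ → ℝ) : Prop :=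
  (∀ μ, 0 ≤ d μ) ∧
    ∀ μ, inHdom (2 * k) (g μ) ∧
      ∀ n, LdLcoef k α (g μ) n = (d μ : ℂ) * (g μ) n

/-- Matrix entry `⟨g_μ| SρS |g_ν⟩ = √(1+d_μ)√(1+d_ν) ⟨g_μ|ρ|g_ν⟩` of `SρS`
in the eigenbasis `g` of `L†L`, where `S = √(I + L†L)`. -/
def SEntry (g : HilbertBasis ℕ ℂ H) (d : ℕ → ℝ) (ρ : H →L[ℂ] H) (μ ν : ℕ) : ℂ :=
  ((Real.sqrt (1 + d μ) * Real.sqrt (1 + d ν) : ℝ) : ℂ) * ⟪g μ, ρ (g ν)⟫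

/-- Membership in `K_L(H) = {ρ ∈ K¹(H) : tr|SρS| < ∞}`: `ρ` is Hermitian trace class and the
operator with matrix `SρS` is Hermitian trace class. -/
def memKL (g : HilbertBasis ℕ ℂ H) (d : ℕ → ℝ) (ρ : H →L[ℂ] H) : Prop :=
  IsHermitianTraceClass ρ ∧
    ∃ T : H →L[ℂ] H, IsHermitianTraceClass T ∧
      ∀ μ ν, ⟪g μ, T (g ν)⟫ = SEntry g d ρ μ ν

/-- The norm `‖ρ‖_L = tr|SρS|` on `K_L(H)`. -/
def Lnorm (g : HilbertBasis ℕ ℂ H) (d : ℕ → ℝ) (ρ : H →L[ℂ] H) : ℝ :=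
  sInf {s | ∃ T : H →L[ℂ] H, IsHermitianTraceClass T ∧
    (∀ μ ν, ⟪g μ, T (g ν)⟫ = SEntry g d ρ μ ν) ∧ s = traceNorm T}

/-- Fock-basis matrix entry `⟨m| 𝔄(ρ) |n⟩` of
`𝔄(ρ) = (L†Lρ + ρL†L)/2 − LρL†` (weak formulation). -/
def Amat (k : ℕ) (α : ℝ) (ρ : H →L[ℂ] H) (m n : ℕ) : ℂ :=
  (1 / 2 : ℂ) * (⟪ldlFock k α m, ρ (fock n)⟫ + ⟪fock m, ρ (ldlFock k α n)⟫)
    - ⟪ldagFock k α m, ρ (ldagFock k α n)⟫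

/-- `ρ` belongs to the domain of the superoperator `𝔄` on `K_L(H)`, with value `A = 𝔄(ρ)`. -/
def inDomA (k : ℕ) (α : ℝ) (g : HilbertBasis ℕ ℂ H) (d : ℕ → ℝ)
    (ρ A : H →L[ℂ] H) : Prop :=
  memKL g d ρ ∧ memKL g d A ∧ ∀ m n, ⟪fock m, A (fock n)⟫ = Amat k α ρ m n

/-- `(ρ, A)` is a `C¹` trajectory of the Lindblad master equation `dρ/dt = −𝔄(ρ)` in `K_L(H)`:
`ρ(t)` lies in the domain of `𝔄` with `A(t) = 𝔄(ρ(t))`, the derivative of `ρ` in the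
`‖·‖_L`-norm equals `−A(t)`, and `t ↦ A(t)` is `‖·‖_L`-continuous. -/
def IsLindbladTrajectory (k : ℕ) (α : ℝ) (g : HilbertBasis ℕ ℂ H) (d : ℕ → ℝ)
    (ρ A : ℝ → (H →L[ℂ] H)) : Prop :=
  (∀ t, 0 ≤ t → inDomA k α g d (ρ t) (A t)) ∧
  (∀ t, 0 ≤ t → Filter.Tendsto
      (fun h : ℝ => Lnorm g d (((1 / h : ℝ) : ℂ) • (ρ (t + h) - ρ t) + A t))
      (nhdsWithin 0 {h : ℝ | h ≠ 0 ∧ 0 ≤ t + h}) (nhds 0)) ∧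
  (∀ t, 0 ≤ t → Filter.Tendsto (fun s => Lnorm g d (A s - A t))
      (nhdsWithin t (Set.Ici 0)) (nhds 0))

/-- The coherent state amplitude `α_m = α e^{2iπm/k}` for `m = 1, …, k` (indexed by `Fin k`). -/
def catAmp (k : ℕ) (α : ℝ) (m : Fin k) : ℂ :=
  (α : ℂ) * Complex.exp (2 * Real.pi * Complex.I * (m.1 + 1) / k)

/-- Coefficients `e^{−|β|²/2} βⁿ/√(n!)` of the coherent state `|β⟩`. -/
def cohCoeff (β : ℂ) : ℕ → ℂ :=
  fun n => ((Real.exp (-(‖β‖) ^ 2 / 2) : ℝ) : ℂ) * β ^ n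
    / ((Real.sqrt (n.factorial) : ℝ) : ℂ)

open Classical in
/-- The coherent state `|β⟩ ∈ H`. -/
def coh (β : ℂ) : H :=
  if h : Memℓp (cohCoeff β) 2 then (⟨cohCoeff β, h⟩ : H) else 0

/-- The `k`-dimensional subspace `H_{α,k}` spanned by the coherent states `|α_m⟩`. -/
def catSpan (k : ℕ) (α : ℝ) : Submodule ℂ H :=
  Submodule.span ℂ (Set.range fun m : Fin k => coh (catAmp k α m))

/-- The rank-one operator `|m⟩⟨n|`. -/
def ketbra (m n : ℕ) : H →L[ℂ] H := (innerSL ℂ (fock n)).smulRight (fock m)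

/-- Coefficientwise action of `(a†)^k + a^k`. -/
def xcoef (k : ℕ) (ψ : ℕ → ℂ) : ℕ → ℂ :=
  fun n => adcoef^[k] ψ n + acoef^[k] ψ n

/-- Coefficientwise action of the inverse resolvent
`R_λ^{-1} = (I + λ(N(N−1)⋯(N−k+1) + α^{2k}))^{-1}`. -/
def rinvCoeff (k : ℕ) (α l : ℝ) (ψ : ℕ → ℂ) : ℕ → ℂ :=
  fun n => (((1 + l * (fallR k n + α ^ (2 * k)))⁻¹ : ℝ) : ℂ) * ψ n

/-- Diagonal Fock-matrix entry `⟨n| 𝔏_L(ξ) |n⟩` of the Lindblad generator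
`𝔏_L(ξ) = LξL† − ½L†Lξ − ½ξL†L` (weak formulation). -/
def lindDiag (k : ℕ) (α : ℝ) (ξ : H →L[ℂ] H) (n : ℕ) : ℂ :=
  ⟪ldagFock k α n, ξ (ldagFock k α n)⟫
    - (1 / 2 : ℂ) * ⟪ldlFock k α n, ξ (fock n)⟫
    - (1 / 2 : ℂ) * ⟪fock n, ξ (ldlFock k α n)⟫

/-- The (unnormalized) `k`-legged Schrödinger cat state
`v_ℓ = ∑_{m=1}^k e^{2iπℓm/k} |α_m⟩`. -/
def catVec (k : ℕ) (α : ℝ) (l : ℤ) : H :=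
  ∑ m ∈ Finset.Icc 1 k,
    Complex.exp (2 * Real.pi * Complex.I * l * m / k) •
      coh ((α : ℂ) * Complex.exp (2 * Real.pi * Complex.I * m / k))

/-- The vector `(I + λL†L)/2 |m⟩`. -/
def resFock (k : ℕ) (α l : ℝ) (m : ℕ) : H :=
  (1 / 2 : ℂ) • (fock m + ((l : ℝ) : ℂ) • ldlFock k α m)

/-- Weak (matrix-element) formulation of the Sylvester-type equation
`((I+λL†L)/2)ρ + ρ((I+λL†L)/2) = f + rλ LρL†`. -/
def sylvEq (k : ℕ) (α l r : ℝ) (f ρ : H →L[ℂ] H) : Prop :=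
  ∀ m n, ⟪resFock k α l m, ρ (fock n)⟫ + ⟪fock m, ρ (resFock k α l n)⟫
    = ⟪fock m, f (fock n)⟫ + ((r * l : ℝ) : ℂ) * ⟪ldagFock k α m, ρ (ldagFock k α n)⟫

/-- `m(n)` as an integer: `(n+1)(n+2)⋯(n+k) − n(n−1)⋯(n−k+1)`. -/
def mInt (k n : ℕ) : ℤ :=
  (∏ j ∈ Finset.Icc 1 k, ((n : ℤ) + j)) - ∏ j ∈ Finset.range k, ((n : ℤ) - j)

/-! The `k`-th powers of `a` and `a†` are weighted shifts: `(a^k ψ)_n = √((n+1)⋯(n+k)) ψ_{n+k}` and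
`((a†)^k ψ)_{n+k} = √((n+1)⋯(n+k)) ψ_n`. Pairing the coordinate `n + k` of `L†ψ` with the
coordinate `n` of `Lψ`, the cross terms agree, and
`|(L†ψ)_{n+k}|² − |(Lψ)_n|² = ((n+1)⋯(n+k) − α^{2k}) (|ψ_n|² − |ψ_{n+k}|²)`.
Summing over `n` and shifting the second half back by `k` turns the right-hand side into
`∑ m(n) |ψ_n|²`. The bound `m(n) ≥ k!` follows by induction on `k` from
`m_{k+1}(n) = (n+k+1) m_k(n) + (2k+1) n(n−1)⋯(n−k+1)`. -/

lemma fallR_eq_descFactorial (k n : ℕ) : fallR k n = n.descFactorial k := by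
  induction k with
  | zero => simp [fallR]
  | succ k ih =>
    rw [fallR, Finset.prod_range_succ, ← fallR, ih, Nat.descFactorial_succ]
    rcases le_or_gt k n with h | h
    · push_cast [h]
      ring
    · simp [Nat.descFactorial_of_lt h]

lemma riseR_eq_ascFactorial (k n : ℕ) : riseR k n = (n + 1).ascFactorial k := by
  induction k with
  | zero => simp [riseR]
  | succ k ih =>
    rw [riseR, Finset.prod_Icc_succ_top (by omega), ← riseR, ih, Nat.ascFactorial_succ]
    push_cast
    ring

lemma fallR_nonneg (k n : ℕ) : 0 ≤ fallR k n := by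
  rw [fallR_eq_descFactorial]
  positivity

lemma riseR_nonneg (k n : ℕ) : 0 ≤ riseR k n := by
  rw [riseR_eq_ascFactorial]
  positivity

lemma fallR_of_lt {k n : ℕ} (h : n < k) : fallR k n = 0 := by
  simp [fallR_eq_descFactorial, Nat.descFactorial_of_lt h]

lemma fallR_add_self (k n : ℕ) : fallR k (n + k) = riseR k n := by
  simp [fallR_eq_descFactorial, riseR_eq_ascFactorial, Nat.add_descFactorial_eq_ascFactorial]

lemma fallR_succ (k n : ℕ) : fallR (k + 1) n = fallR k n * (n - k) :=
  Finset.prod_range_succ _ k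

lemma riseR_succ (k n : ℕ) : riseR (k + 1) n = riseR k n * (n + k + 1) := by
  simp only [riseR_eq_ascFactorial, Nat.ascFactorial_succ]
  push_cast
  ring

lemma mval_succ (k n : ℕ) :
    mval (k + 1) n = (n + k + 1) * mval k n + (2 * k + 1) * fallR k n := by
  rw [mval, mval, riseR_succ, fallR_succ]
  ring

lemma factorial_le_mval {k : ℕ} (hk : 1 ≤ k) (n : ℕ) : (k.factorial : ℝ) ≤ mval k n := by
  induction k, hk using Nat.le_induction with
  | base => simp [mval, riseR, fallR]
  | succ k hk ih =>
    have hmval : 0 ≤ mval k n := (Nat.cast_nonneg _).trans ih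
    rw [mval_succ, Nat.factorial_succ, Nat.cast_mul, Nat.cast_succ, add_comm (k : ℝ)]
    have : (1 + k : ℝ) * mval k n ≤ (n + k + 1) * mval k n :=
      mul_le_mul_of_nonneg_right (by linarith [(Nat.cast_nonneg n : (0 : ℝ) ≤ n)]) hmval
    nlinarith [fallR_nonneg k n]

lemma acoef_iterate_apply (k : ℕ) (ψ : ℕ → ℂ) (n : ℕ) :
    acoef^[k] ψ n = (Real.sqrt (riseR k n) : ℂ) * ψ (n + k) := by
  induction k generalizing ψ with
  | zero => simp [riseR]
  | succ k ih =>
    rw [Function.iterate_succ_apply, ih, acoef, riseR_succ,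
      Real.sqrt_mul (riseR_nonneg k n), ← add_assoc]
    push_cast
    ring

lemma adcoef_iterate_apply (k : ℕ) (ψ : ℕ → ℂ) (n : ℕ) :
    adcoef^[k] ψ n = (Real.sqrt (fallR k n) : ℂ) * ψ (n - k) := by
  induction k generalizing ψ with
  | zero => simp [fallR]
  | succ k ih =>
    rw [Function.iterate_succ_apply, ih]
    rcases le_or_gt n k with h | h
    · simp [adcoef, Nat.sub_eq_zero_of_le h, fallR_of_lt (Nat.lt_succ_of_le h)]
    · rw [adcoef, if_neg (by omega), fallR_succ, ← Nat.cast_sub h.le,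
        Real.sqrt_mul (fallR_nonneg k n), Nat.sub_sub]
      push_cast
      ring

lemma norm_sub_sq_sub_norm_sub_sq_swap {E : Type*} [NormedAddCommGroup E]
    [InnerProductSpace ℝ E] (s t : ℝ) (u v : E) :
    ‖s • u - t • v‖ ^ 2 - ‖s • v - t • u‖ ^ 2 = (s ^ 2 - t ^ 2) * (‖u‖ ^ 2 - ‖v‖ ^ 2) := by
  simp only [norm_sub_sq_real, norm_smul, real_inner_smul_left, real_inner_smul_right,
    real_inner_comm u v, Real.norm_eq_abs, mul_pow, sq_abs]
  ring

lemma summable_mul_norm_sq_of_finite_support {ι E : Type*} [SeminormedAddCommGroup E]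
    {ψ : ι → E} (hψ : (Function.support ψ).Finite) (w : ι → ℝ) :
    Summable fun i => w i * ‖ψ i‖ ^ 2 :=
  summable_of_hasFiniteSupport <| hψ.subset fun i hi h => hi (by simp [h])

section Coefficients

variable (k : ℕ) (α : ℝ) (ψ : ℕ → ℂ)

lemma norm_sq_Ldcoef_of_lt {n : ℕ} (h : n < k) :
    ‖Ldcoef k α ψ n‖ ^ 2 = α ^ (2 * k) * ‖ψ n‖ ^ 2 := by
  simp [Ldcoef, adcoef_iterate_apply, fallR_of_lt h, mul_pow, ← pow_mul, mul_comm k 2,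
    (even_two_mul k).pow_abs]

lemma norm_sq_Ldcoef_add_sub_norm_sq_Lcoef (n : ℕ) :
    ‖Ldcoef k α ψ (n + k)‖ ^ 2 - ‖Lcoef k α ψ n‖ ^ 2
      = (riseR k n - α ^ (2 * k)) * (‖ψ n‖ ^ 2 - ‖ψ (n + k)‖ ^ 2) := by
  have h := norm_sub_sq_sub_norm_sub_sq_swap (Real.sqrt (riseR k n)) (α ^ k) (ψ n) (ψ (n + k))
  simp only [Complex.real_smul, Complex.ofReal_pow, Real.sq_sqrt (riseR_nonneg k n)] at h
  rw [Ldcoef, Lcoef, adcoef_iterate_apply, acoef_iterate_apply, Nat.add_sub_cancel,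
    fallR_add_self, h, pow_mul']

end Coefficients

theorem tsum_norm_sq_Ldcoef_sub_tsum_norm_sq_Lcoef (k : ℕ) (α : ℝ) {ψ : ℕ → ℂ}
    (hψ : (Function.support ψ).Finite) :
    (∑' n, ‖Ldcoef k α ψ n‖ ^ 2) - (∑' n, ‖Lcoef k α ψ n‖ ^ 2)
      = ∑' n, mval k n * ‖ψ n‖ ^ 2 := by
  obtain ⟨N, hN⟩ := hψ.toFinset.exists_nat_subset_range
  have hψN : ∀ n, N ≤ n → ψ n = 0 := fun n hn => by
    by_contra h
    exact absurd (hN (hψ.mem_toFinset.mpr h)) (by simpa using hn)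
  have summable : ∀ f : ℕ → ℝ, (∀ n, N + k ≤ n → f n = 0) → Summable f := fun f hf =>
    summable_of_ne_finset_zero (s := Finset.range (N + k)) (by simpa using hf)
  set c := α ^ (2 * k)
  have hD : Summable fun n => ‖Ldcoef k α ψ n‖ ^ 2 := summable _ fun n hn => by
    simp [Ldcoef, adcoef_iterate_apply, hψN n (by omega), hψN (n - k) (by omega)]
  have hE : Summable fun n => ‖Lcoef k α ψ n‖ ^ 2 := summable _ fun n hn => by
    simp [Lcoef, acoef_iterate_apply, hψN n (by omega), hψN (n + k) (by omega)]
  have hweighted := summable_mul_norm_sq_of_finite_support hψ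
  -- the terms below vanish for `n < k`, so their sum is unchanged by the shift `n ↦ n + k`
  have hshift : ∑' n, (‖Ldcoef k α ψ n‖ ^ 2 - (c - fallR k n) * ‖ψ n‖ ^ 2)
      = ∑' n, (‖Lcoef k α ψ n‖ ^ 2 + (riseR k n - c) * ‖ψ n‖ ^ 2) := by
    rw [← (add_left_injective k).tsum_eq]
    · refine tsum_congr fun n => ?_
      rw [fallR_add_self]
      linarith [norm_sq_Ldcoef_add_sub_norm_sq_Lcoef k α ψ n]
    · intro n hn
      by_contra hnot
      have hlt : n < k := by
        by_contra hge
        exact hnot ⟨n - k, Nat.sub_add_cancel (not_lt.mp hge)⟩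
      simp [norm_sq_Ldcoef_of_lt k α ψ hlt, fallR_of_lt hlt, c] at hn
  rw [hD.tsum_sub (hweighted _), hE.tsum_add (hweighted _)] at hshift
  simp only [mval, ← sub_add_sub_cancel (riseR k _) c (fallR k _), add_mul]
  rw [(hweighted _).tsum_add (hweighted _)]
  linarith

theorem factorial_mul_tsum_le_tsum_mval {k : ℕ} (hk : 1 ≤ k) {ψ : ℕ → ℂ}
    (hψ : (Function.support ψ).Finite) :
    (k.factorial : ℝ) * (∑' n, ‖ψ n‖ ^ 2) ≤ ∑' n, mval k n * ‖ψ n‖ ^ 2 := by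
  have summable := summable_mul_norm_sq_of_finite_support hψ
  rw [← tsum_mul_left]
  exact (summable _).tsum_le_tsum
    (fun n => mul_le_mul_of_nonneg_right (factorial_le_mval hk n) (by positivity)) (summable _)

theorem LdagL_le_LLdag_general (k : ℕ) (hk : 1 ≤ k) (α : ℝ)
    (ψ : ℕ → ℂ) (hψ : (Function.support ψ).Finite) :
    ((∑' n, ‖Ldcoef k α ψ n‖ ^ 2) - (∑' n, ‖Lcoef k α ψ n‖ ^ 2)
      = ∑' n, mval k n * ‖ψ n‖ ^ 2) ∧
    ((k.factorial : ℝ) * (∑' n, ‖ψ n‖ ^ 2) ≤ ∑' n, mval k n * ‖ψ n‖ ^ 2) ∧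
    ((∑' n, ‖Lcoef k α ψ n‖ ^ 2) ≤ ∑' n, ‖Ldcoef k α ψ n‖ ^ 2) := by
  have identity := tsum_norm_sq_Ldcoef_sub_tsum_norm_sq_Lcoef k α hψ
  have bound := factorial_mul_tsum_le_tsum_mval hk hψ
  have : 0 ≤ (k.factorial : ℝ) * ∑' n, ‖ψ n‖ ^ 2 := by positivity
  exact ⟨identity, bound, by linarith⟩

/-- For finitely supported `ψ`,
`‖L†ψ‖² − ‖Lψ‖² = ⟨ψ|M|ψ⟩ ≥ k!‖ψ‖²`; in particular `L†L ≤ LL†` as quadratic forms. -/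
theorem LdagL_le_LLdag (k : ℕ) (hk : 1 ≤ k) (α : ℝ) (hα : 0 < α)
    (ψ : ℕ → ℂ) (hψ : (Function.support ψ).Finite) :
    ((∑' n, ‖Ldcoef k α ψ n‖ ^ 2) - (∑' n, ‖Lcoef k α ψ n‖ ^ 2)
      = ∑' n, mval k n * ‖ψ n‖ ^ 2) ∧
    ((k.factorial : ℝ) * (∑' n, ‖ψ n‖ ^ 2) ≤ ∑' n, mval k n * ‖ψ n‖ ^ 2) ∧
    ((∑' n, ‖Lcoef k α ψ n‖ ^ 2) ≤ ∑' n, ‖Ldcoef k α ψ n‖ ^ 2) :=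
  LdagL_le_LLdag_general k hk α ψ hψ

end
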